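/- arXiv:2307.04646 — 3 statements merged into one kernel-verified Lean document; each statement's English description precedes it below -/
import Mathlib

section
/- For a Coxeter group W with length function |·| and Bruhat order ≤, and elements y ≤ x, define Ξ_{y,x}(q) = Σ_{y ≤ y' ≤ x' ≤ x} Q_{y,y'}(q) R_{y',x'}(q) P_{x',x}(q), where P, R are the Kazhdan–Lusztig polynomials and R-polynomials and Q is the inverse Kazhdan–Lusztig polynomial. Then Ξ_{y,x} satisfies the duality relation ov(Ξ_{y,x}(q)) = q^{|y|-|x|} Ξ_{y,x}(q), where ov is the ring involution of Z[q,q^{-1}] sending q to q^{-1}. -/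
open Finset Polynomial LaurentPolynomial

/-- The Bruhat order associated to a Coxeter system: `u ≤ v` if and only if `v` can be obtained
from `u` by successively multiplying on the right by reflections, each multiplication
increasing the length. -/
def CoxeterSystem.bruhatLE {I W : Type*} [Group W] {M : CoxeterMatrix I}
    (cs : CoxeterSystem M W) (u v : W) : Prop :=
  Relation.ReflTransGen
    (fun a b => ∃ t, cs.IsReflection t ∧ b = a * t ∧ cs.length a < cs.length b) u v

/-- Kazhdan–Lusztig data on a poset `W` (intended to be a Coxeter group with its Bruhat order)
with length function `ℓ`: the Kazhdan–Lusztig polynomials `P`, the `R`-polynomials `R`, and the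
inverse Kazhdan–Lusztig polynomials `Q`, together with their standard defining properties:
normalization on the diagonal, degree bounds, the bar-involution identities of
Kazhdan–Lusztig (1980), and the inversion formula relating `Q` and `P`. -/
structure KLData (W : Type*) [DecidableEq W] [PartialOrder W] [LocallyFiniteOrder W] (ℓ : W → ℕ) where
  P : W → W → Polynomial ℤ
  R : W → W → Polynomial ℤ
  Q : W → W → Polynomial ℤ
  P_diag : ∀ x, P x x = 1
  R_diag : ∀ x, R x x = 1
  Q_diag : ∀ x, Q x x = 1
  P_natDegree_le : ∀ ⦃y x⦄, y < x → (P y x).natDegree ≤ (ℓ x - ℓ y - 1) / 2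
  Q_natDegree_le : ∀ ⦃y x⦄, y < x → (Q y x).natDegree ≤ (ℓ x - ℓ y - 1) / 2
  R_monic : ∀ ⦃y x⦄, y ≤ x → (R y x).Monic
  R_natDegree : ∀ ⦃y x⦄, y ≤ x → (R y x).natDegree = ℓ x - ℓ y
  bar_P : ∀ ⦃y x⦄, y ≤ x → invert (toLaurent (P y x)) =
    (∑ u ∈ Icc y x, toLaurent (R y u) * toLaurent (P u x)) * T ((ℓ y : ℤ) - ℓ x)
  bar_R : ∀ ⦃y x⦄, y ≤ x → invert (toLaurent (R y x)) =
    (-1) ^ (ℓ x + ℓ y) * toLaurent (R y x) * T ((ℓ y : ℤ) - ℓ x)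
  bar_Q : ∀ ⦃y x⦄, y ≤ x → invert (toLaurent (Q y x)) =
    (∑ v ∈ Icc y x, toLaurent (Q y v) * toLaurent (R v x)) * T ((ℓ y : ℤ) - ℓ x)
  QP_inversion : ∀ ⦃y x⦄, y ≤ x →
    ∑ z ∈ Icc y x, (-1) ^ (ℓ y + ℓ z) * Q y z * P z x = if y = x then 1 else 0

/-- The polynomial `Ξ_{y,x}(q) = Σ_{y ≤ y' ≤ x' ≤ x} Q_{y,y'}(q) R_{y',x'}(q) P_{x',x}(q)`. -/
noncomputable def KLData.Xi {W : Type*} [DecidableEq W] [PartialOrder W] [LocallyFiniteOrder W] {ℓ : W → ℕ}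
    (kl : KLData W ℓ) (y x : W) : Polynomial ℤ :=
  ∑ y' ∈ Icc y x, ∑ x' ∈ Icc y' x, kl.Q y y' * kl.R y' x' * kl.P x' x

/-- For `y ≤ x` in a Coxeter group `W` (with its Bruhat order and length function),
the polynomial `Ξ_{y,x}` satisfies the duality `ov(Ξ_{y,x}(q)) = q^{|y|-|x|} Ξ_{y,x}(q)`,
where `ov` is the involution of `ℤ[q,q⁻¹]` with `q ↦ q⁻¹`. -/
theorem xi_bar_duality {I W : Type*} [Group W] [DecidableEq W] [PartialOrder W]
    [LocallyFiniteOrder W] {M : CoxeterMatrix I} (cs : CoxeterSystem M W)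
    (hBruhat : ∀ u v : W, u ≤ v ↔ cs.bruhatLE u v)
    (kl : KLData W cs.length) (y x : W) (hyx : y ≤ x) :
    invert (toLaurent (kl.Xi y x)) =
      T ((cs.length y : ℤ) - cs.length x) * toLaurent (kl.Xi y x) := by
  set L : W → ℤ := fun w => (cs.length w : ℤ) with hL
  -- Step 1: collapse the inner sum using `bar_Q`
  have step1 : toLaurent (kl.Xi y x) =
      ∑ x' ∈ Icc y x, invert (toLaurent (kl.Q y x')) * T (L x' - L y) *
        toLaurent (kl.P x' x) := by
    unfold KLData.Xi
    rw [map_sum]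
    simp_rw [map_sum, map_mul]
    rw [Finset.sum_comm' (s := Icc y x) (t := fun y' => Icc y' x)
        (t' := Icc y x) (s' := fun x' => Icc y x')
        (h := by
          intro y' x'
          simp only [mem_Icc]
          constructor
          · rintro ⟨⟨h1, _⟩, h3, h4⟩
            exact ⟨⟨h1, h3⟩, h1.trans h3, h4⟩
          · rintro ⟨⟨h1, h3⟩, _, h4⟩
            exact ⟨⟨h1, h3.trans h4⟩, h3, h4⟩)]
    refine Finset.sum_congr rfl fun x' hx' => ?_
    rw [mem_Icc] at hx'
    rw [← Finset.sum_mul]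
    congr 1
    have hQ := kl.bar_Q hx'.1
    have h0 : (L y - L x') + (L x' - L y) = 0 := by ring
    rw [hQ, mul_assoc, ← T_add, h0, T_zero, mul_one]
  -- Step 2: apply `invert` and use `bar_P`
  conv_lhs => rw [step1]
  rw [map_sum]
  have step2 : ∀ x' ∈ Icc y x,
      invert (invert (toLaurent (kl.Q y x')) * T (L x' - L y) * toLaurent (kl.P x' x)) =
      T (L y - L x) * ∑ u ∈ Icc x' x,
        toLaurent (kl.Q y x') * toLaurent (kl.R x' u) * toLaurent (kl.P u x) := by
    intro x' hx'
    rw [mem_Icc] at hx'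
    rw [map_mul, map_mul, invert_T, involutive_invert (toLaurent (kl.Q y x')),
      kl.bar_P hx'.2]
    rw [show toLaurent (kl.Q y x') * T (-(L x' - L y)) *
        ((∑ u ∈ Icc x' x, toLaurent (kl.R x' u) * toLaurent (kl.P u x)) * T (L x' - L x)) =
        (T (-(L x' - L y)) * T (L x' - L x)) *
        (toLaurent (kl.Q y x') * ∑ u ∈ Icc x' x,
          toLaurent (kl.R x' u) * toLaurent (kl.P u x)) from by ring]
    rw [← T_add, show -(L x' - L y) + (L x' - L x) = L y - L x from by ring,
      Finset.mul_sum]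
    congr 1
    exact Finset.sum_congr rfl fun u _ => by ring
  rw [Finset.sum_congr rfl step2, ← Finset.mul_sum]
  congr 1
  simp only [KLData.Xi]
  rw [map_sum]
  refine Finset.sum_congr rfl fun x' _ => ?_
  rw [map_sum]
  refine Finset.sum_congr rfl fun u _ => ?_
  rw [map_mul, map_mul]
end

section
/- For y ≤ x in a Coxeter group W, the polynomial Ξ_{y,x}(q) = Σ_{y ≤ y' ≤ x' ≤ x} Q_{y,y'}(q) R_{y',x'}(q) P_{x',x}(q) is a monic polynomial in q of degree |x| - |y|. -/
open Finset Polynomial LaurentPolynomial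

/-! In `Ξ_{y,x}` the term indexed by `y' = y, x' = x` is `R_{y,x}`, which is monic of degree
`|x| - |y|`. Every other term `Q_{y,y'} R_{y',x'} P_{x',x}` has strictly smaller degree: `R_{y',x'}`
contributes exactly `|x'| - |y'|`, while the degree bounds on `Q` and `P` give at most
`|y'| - |y| - 1` and `|x| - |x'| - 1` as soon as `y < y'`, resp. `x' < x`, and at least one of these
holds. Since Bruhat covers increase the length, `|·|` is strictly monotone. -/

theorem Polynomial.monic_sum_and_natDegree_eq_of_degree_lt {R ι : Type*} [Semiring R]
    [Nontrivial R] [DecidableEq ι] {s : Finset ι} {f : ι → R[X]} {i : ι} (hi : i ∈ s)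
    (hf : (f i).Monic) (hlt : ∀ j ∈ s, j ≠ i → (f j).degree < (f i).degree) :
    (∑ j ∈ s, f j).Monic ∧ (∑ j ∈ s, f j).natDegree = (f i).natDegree := by
  have hrest : (∑ j ∈ s.erase i, f j).degree < (f i).degree :=
    (degree_sum_le _ _).trans_lt <|
      (Finset.sup_lt_iff (bot_lt_iff_ne_bot.2 (degree_ne_bot.2 hf.ne_zero))).2 fun j hj =>
        hlt j (mem_of_mem_erase hj) (ne_of_mem_erase hj)
  rw [← add_sum_erase s f hi]
  exact ⟨hf.add_of_left hrest, natDegree_add_eq_left_of_degree_lt hrest⟩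

namespace CoxeterSystem

variable {I W : Type*} [Group W] {M : CoxeterMatrix I} (cs : CoxeterSystem M W)

theorem eq_or_length_lt_of_bruhatLE {u v : W} (h : cs.bruhatLE u v) :
    u = v ∨ cs.length u < cs.length v := by
  induction h with
  | refl => exact Or.inl rfl
  | tail _ hcover ih =>
    obtain ⟨_, _, _, hlt⟩ := hcover
    exact Or.inr (ih.elim (· ▸ hlt) (·.trans hlt))

theorem strictMono_length_of_le_iff_bruhatLE [PartialOrder W]
    (hBruhat : ∀ u v : W, u ≤ v ↔ cs.bruhatLE u v) : StrictMono cs.length := fun _ _ h =>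
  (cs.eq_or_length_lt_of_bruhatLE ((hBruhat _ _).1 h.le)).resolve_left h.ne

end CoxeterSystem

namespace KLData

variable {W : Type*} [DecidableEq W] [PartialOrder W] [LocallyFiniteOrder W] {ℓ : W → ℕ}
  (kl : KLData W ℓ) {y x : W}

theorem natDegree_P_add_lt (hℓ : StrictMono ℓ) (h : y < x) :
    (kl.P y x).natDegree + ℓ y < ℓ x := by
  have := kl.P_natDegree_le h
  have := Nat.div_le_self (ℓ x - ℓ y - 1) 2
  have := hℓ h
  omega

theorem natDegree_Q_add_lt (hℓ : StrictMono ℓ) (h : y < x) :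
    (kl.Q y x).natDegree + ℓ y < ℓ x := by
  have := kl.Q_natDegree_le h
  have := Nat.div_le_self (ℓ x - ℓ y - 1) 2
  have := hℓ h
  omega

theorem natDegree_P_add_le (hℓ : StrictMono ℓ) (h : y ≤ x) :
    (kl.P y x).natDegree + ℓ y ≤ ℓ x := by
  rcases h.eq_or_lt with rfl | h
  · simp [kl.P_diag]
  · exact (kl.natDegree_P_add_lt hℓ h).le

theorem natDegree_Q_add_le (hℓ : StrictMono ℓ) (h : y ≤ x) :
    (kl.Q y x).natDegree + ℓ y ≤ ℓ x := by
  rcases h.eq_or_lt with rfl | h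
  · simp [kl.Q_diag]
  · exact (kl.natDegree_Q_add_lt hℓ h).le

theorem natDegree_R_add (hℓ : Monotone ℓ) (h : y ≤ x) : (kl.R y x).natDegree + ℓ y = ℓ x := by
  have := hℓ h
  rw [kl.R_natDegree h]
  omega

theorem natDegree_QRP_add_lt (hℓ : StrictMono ℓ) {y' x' : W} (hy : y ≤ y') (hyx : y' ≤ x')
    (hx : x' ≤ x) (hne : y' ≠ y ∨ x' ≠ x) :
    (kl.Q y y' * kl.R y' x' * kl.P x' x).natDegree + ℓ y < ℓ x := by
  have hmul := natDegree_mul_le (p := kl.Q y y' * kl.R y' x') (q := kl.P x' x)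
  have hmul' := natDegree_mul_le (p := kl.Q y y') (q := kl.R y' x')
  have hR := kl.natDegree_R_add hℓ.monotone hyx
  rcases hne with hne | hne
  · have hQ := kl.natDegree_Q_add_lt hℓ (hy.lt_of_ne' hne)
    have hP := kl.natDegree_P_add_le hℓ hx
    omega
  · have hQ := kl.natDegree_Q_add_le hℓ hy
    have hP := kl.natDegree_P_add_lt hℓ (hx.lt_of_ne hne)
    omega

theorem Xi_eq_sum_sigma (y x : W) :
    kl.Xi y x =
      ∑ p ∈ (Icc y x).sigma (fun y' => Icc y' x), kl.Q y p.1 * kl.R p.1 p.2 * kl.P p.2 x := by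
  rw [Xi, sum_sigma]

theorem monic_Xi_and_natDegree_add (hℓ : StrictMono ℓ) (hyx : y ≤ x) :
    (kl.Xi y x).Monic ∧ (kl.Xi y x).natDegree + ℓ y = ℓ x := by
  have hdiag : kl.Q y y * kl.R y x * kl.P x x = kl.R y x := by simp [kl.Q_diag, kl.P_diag]
  have hR := kl.natDegree_R_add hℓ.monotone hyx
  have hmem : (⟨y, x⟩ : Σ _ : W, W) ∈ (Icc y x).sigma (fun y' => Icc y' x) := by simp [hyx]
  have hlower : ∀ p ∈ (Icc y x).sigma (fun y' => Icc y' x), p ≠ ⟨y, x⟩ →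
      (kl.Q y p.1 * kl.R p.1 p.2 * kl.P p.2 x).degree < (kl.R y x).degree := by
    rintro ⟨y', x'⟩ hp hne
    dsimp only
    simp only [mem_sigma, mem_Icc] at hp
    have hne : y' ≠ y ∨ x' ≠ x := by
      by_contra! h
      exact hne (by rw [h.1, h.2])
    have hlt := kl.natDegree_QRP_add_lt hℓ hp.1.1 hp.2.1 hp.2.2 hne
    rw [degree_eq_natDegree (kl.R_monic hyx).ne_zero]
    exact degree_le_natDegree.trans_lt (by exact_mod_cast (by omega))
  rw [← hdiag] at hlower
  obtain ⟨hmonic, hdeg⟩ := monic_sum_and_natDegree_eq_of_degree_lt hmem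
    (by rw [hdiag]; exact kl.R_monic hyx) hlower
  rw [Xi_eq_sum_sigma]
  exact ⟨hmonic, by rw [hdeg, hdiag, hR]⟩

end KLData

/-- For `y ≤ x` in a Coxeter group `W`, the polynomial `Ξ_{y,x}` is a monic
polynomial in `q` of degree `|x| - |y|`. -/
theorem xi_monic_of_degree {I W : Type*} [Group W] [DecidableEq W] [PartialOrder W]
    [LocallyFiniteOrder W] {M : CoxeterMatrix I} (cs : CoxeterSystem M W)
    (hBruhat : ∀ u v : W, u ≤ v ↔ cs.bruhatLE u v)
    (kl : KLData W cs.length) (y x : W) (hyx : y ≤ x) :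
    (kl.Xi y x).Monic ∧ (kl.Xi y x).natDegree + cs.length y = cs.length x :=
  kl.monic_Xi_and_natDegree_add (cs.strictMono_length_of_le_iff_bruhatLE hBruhat) hyx
end

section
/- For y ≤ x in a Coxeter group W, the polynomials Ξ satisfy the inversion formula Σ_{y ≤ z ≤ x} (-1)^{|y|+|z|} Ξ_{y,z}(q) Ξ_{z,x}(q) = δ_{x,y}. -/
open Finset Polynomial LaurentPolynomial

namespace XiInv
set_option linter.unusedSectionVars false
variable {W : Type*} [DecidableEq W] [PartialOrder W] [LocallyFiniteOrder W]

lemma sum_Icc_comm {A : Type*} [AddCommMonoid A] (y x : W) (g : W → W → A) :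
    ∑ u ∈ Icc y x, ∑ v ∈ Icc u x, g u v = ∑ v ∈ Icc y x, ∑ u ∈ Icc y v, g u v := by
  apply Finset.sum_comm'
  intro u v
  simp only [mem_Icc]
  constructor
  · rintro ⟨⟨h1, h2⟩, h3, h4⟩; exact ⟨⟨h1, h3⟩, h1.trans h3, h4⟩
  · rintro ⟨⟨h1, h3⟩, h2, h4⟩; exact ⟨⟨h1, h3.trans h4⟩, h3, h4⟩

noncomputable def conv (A B : W → W → Polynomial ℤ) : W → W → Polynomial ℤ :=
  fun y x => ∑ z ∈ Icc y x, A y z * B z x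

lemma conv_assoc (A B C : W → W → Polynomial ℤ) : conv (conv A B) C = conv A (conv B C) := by
  funext y x
  simp only [conv, Finset.sum_mul, Finset.mul_sum]
  rw [← sum_Icc_comm y x (fun u v => A y u * B u v * C v x)]
  exact Finset.sum_congr rfl fun u _ => Finset.sum_congr rfl fun v _ => by ring

noncomputable def delta : W → W → Polynomial ℤ := fun y x => if y = x then 1 else 0

def Supported (A : W → W → Polynomial ℤ) : Prop := ∀ y x : W, ¬ y ≤ x → A y x = 0

lemma supported_conv (A B : W → W → Polynomial ℤ) : Supported (conv A B) := by
  intro y x h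
  rw [conv, Icc_eq_empty h, Finset.sum_empty]

lemma supported_delta : Supported (delta (W := W)) := by
  intro y x h
  simp only [delta, if_neg (fun e => h (le_of_eq e))]

lemma conv_delta_right {A : W → W → Polynomial ℤ} (hA : Supported A) : conv A delta = A := by
  funext y x
  by_cases h : y ≤ x
  · rw [conv, Finset.sum_eq_single_of_mem x (mem_Icc.2 ⟨h, le_refl x⟩)]
    · simp [delta]
    · intro z hz hne
      simp [delta, hne]
  · rw [supported_conv A delta y x h, hA y x h]

lemma conv_delta_left {A : W → W → Polynomial ℤ} (hA : Supported A) : conv delta A = A := by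
  funext y x
  by_cases h : y ≤ x
  · rw [conv, Finset.sum_eq_single_of_mem y (mem_Icc.2 ⟨le_refl y, h⟩)]
    · simp [delta]
    · intro z hz hne
      simp [delta, Ne.symm hne]
  · rw [supported_conv delta A y x h, hA y x h]

lemma conv_sub_left (A B C : W → W → Polynomial ℤ) :
    conv (A - B) C = conv A C - conv B C := by
  funext y x
  simp [conv, sub_mul, Finset.sum_sub_distrib]

lemma supported_sub {A B : W → W → Polynomial ℤ} (hA : Supported A) (hB : Supported B) :
    Supported (A - B) := by
  intro y x h
  simp [Pi.sub_apply, hA y x h, hB y x h]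

lemma conv_diag (A B : W → W → Polynomial ℤ) (x : W) : conv A B x x = A x x * B x x := by
  rw [conv, Icc_self, Finset.sum_singleton]

/-- Sign helper. -/
lemma neg_one_pow_helper (a b c : ℕ) :
    ((-1 : Polynomial ℤ)) ^ (a + b) * (-1) ^ (b + c) = (-1) ^ (a + c) := by
  rw [← pow_add, show a + b + (b + c) = (a + c) + 2 * b by ring, pow_add, pow_mul,
    neg_one_sq, one_pow, mul_one]

section KL
variable (ℓ : W → ℕ)

noncomputable def sgn (A : W → W → Polynomial ℤ) : W → W → Polynomial ℤ :=
  fun y x => (-1) ^ (ℓ y + ℓ x) * A y x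

lemma sgn_conv (A B : W → W → Polynomial ℤ) : sgn ℓ (conv A B) = conv (sgn ℓ A) (sgn ℓ B) := by
  funext y x
  simp only [sgn, conv, Finset.mul_sum]
  exact Finset.sum_congr rfl fun z _ => by
    rw [show (-1 : Polynomial ℤ) ^ (ℓ y + ℓ z) * A y z * ((-1) ^ (ℓ z + ℓ x) * B z x)
        = ((-1) ^ (ℓ y + ℓ z) * (-1) ^ (ℓ z + ℓ x)) * (A y z * B z x) by ring,
      neg_one_pow_helper]

lemma sgn_sgn (A : W → W → Polynomial ℤ) : sgn ℓ (sgn ℓ A) = A := by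
  funext y x
  simp only [sgn, ← mul_assoc, ← pow_add, ← two_mul, pow_mul, neg_one_sq, one_pow, one_mul]

lemma sgn_delta : sgn ℓ (delta (W := W)) = delta := by
  funext y x
  by_cases h : y = x
  · subst h
    simp [sgn, delta, ← two_mul, pow_mul]
  · simp [sgn, delta, h]

lemma supported_sgn {A : W → W → Polynomial ℤ} (hA : Supported A) : Supported (sgn ℓ A) := by
  intro y x h
  simp [sgn, hA y x h]

variable {ℓ} (kl : KLData W ℓ)

open scoped Classical in
noncomputable def Pm : W → W → Polynomial ℤ := fun y x => if y ≤ x then kl.P y x else 0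
open scoped Classical in
noncomputable def Rm : W → W → Polynomial ℤ := fun y x => if y ≤ x then kl.R y x else 0
open scoped Classical in
noncomputable def Qm : W → W → Polynomial ℤ := fun y x => if y ≤ x then kl.Q y x else 0

lemma supported_Pm : Supported (Pm kl) := fun y x h => by simp [Pm, h]
lemma supported_Rm : Supported (Rm kl) := fun y x h => by simp [Rm, h]
lemma supported_Qm : Supported (Qm kl) := fun y x h => by simp [Qm, h]

lemma Pm_diag (x : W) : Pm kl x x = 1 := by simp [Pm, kl.P_diag]
lemma Rm_diag (x : W) : Rm kl x x = 1 := by simp [Rm, kl.R_diag]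
lemma Qm_diag (x : W) : Qm kl x x = 1 := by simp [Qm, kl.Q_diag]

/-- Cancellation: a matrix supported on `≤`, vanishing on the diagonal, killed by
right convolution with the unitriangular `P`, is zero. -/
lemma cancel (hmono : ∀ ⦃a b : W⦄, a < b → ℓ a < ℓ b) (f : W → W → Polynomial ℤ)
    (hsupp : Supported f) (hdiag : ∀ x : W, f x x = 0)
    (hP : ∀ y x : W, conv f (Pm kl) y x = 0) :
    f = 0 := by
  funext y x
  show f y x = 0
  suffices h : ∀ n (x : W), ℓ x = n → f y x = 0 from h (ℓ x) x rfl
  intro n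
  induction n using Nat.strong_induction_on with
  | _ n ih =>
    intro x hn
    by_cases hyx : y ≤ x
    · rcases eq_or_lt_of_le hyx with rfl | hlt
      · exact hdiag y
      · have h0 := hP y x
        rw [conv, Finset.sum_eq_single_of_mem x (mem_Icc.2 ⟨hyx, le_refl x⟩)] at h0
        · rwa [Pm_diag, mul_one] at h0
        · intro z hz hne
          have hzx : z < x := lt_of_le_of_ne (mem_Icc.1 hz).2 hne
          rw [ih (ℓ z) (hn ▸ hmono hzx) z rfl, zero_mul]
    · exact hsupp y x hyx

lemma bar_term {y x : W} (hyx : y ≤ x) {u : W} (hu : u ∈ Icc y x) :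
    invert (toLaurent (kl.R y u) * toLaurent (kl.P u x)) * T ((ℓ x : ℤ) - ℓ y)
      = ∑ v ∈ Icc u x, (-1) ^ (ℓ y + ℓ u) *
          (toLaurent (kl.R y u) * (toLaurent (kl.R u v) * toLaurent (kl.P v x))) := by
  obtain ⟨h1, h2⟩ := mem_Icc.1 hu
  rw [map_mul, kl.bar_R h1, kl.bar_P h2]
  have hT : T ((ℓ y : ℤ) - ℓ u) * (T ((ℓ u : ℤ) - ℓ x) * T ((ℓ x : ℤ) - ℓ y))
      = (1 : LaurentPolynomial ℤ) := by
    rw [← T_add, ← T_add, show ((ℓ u : ℤ) - ℓ x) + ((ℓ x : ℤ) - ℓ y) = (ℓ u : ℤ) - ℓ y by ring,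
      show ((ℓ y : ℤ) - ℓ u) + ((ℓ u : ℤ) - ℓ y) = 0 by ring, T_zero]
  calc (-1) ^ (ℓ u + ℓ y) * toLaurent (kl.R y u) * T ((ℓ y : ℤ) - ℓ u) *
        ((∑ v ∈ Icc u x, toLaurent (kl.R u v) * toLaurent (kl.P v x)) * T ((ℓ u : ℤ) - ℓ x)) *
        T ((ℓ x : ℤ) - ℓ y)
      = (-1) ^ (ℓ u + ℓ y) * toLaurent (kl.R y u) *
          (∑ v ∈ Icc u x, toLaurent (kl.R u v) * toLaurent (kl.P v x)) *
          (T ((ℓ y : ℤ) - ℓ u) * (T ((ℓ u : ℤ) - ℓ x) * T ((ℓ x : ℤ) - ℓ y))) := by ring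
    _ = (-1) ^ (ℓ u + ℓ y) * toLaurent (kl.R y u) *
          (∑ v ∈ Icc u x, toLaurent (kl.R u v) * toLaurent (kl.P v x)) := by rw [hT, mul_one]
    _ = ∑ v ∈ Icc u x, (-1) ^ (ℓ y + ℓ u) *
          (toLaurent (kl.R y u) * (toLaurent (kl.R u v) * toLaurent (kl.P v x))) := by
        rw [add_comm (ℓ u) (ℓ y), mul_assoc, Finset.mul_sum]
        rw [Finset.mul_sum]


end KL
section KL2
variable {ℓ : W → ℕ} (kl : KLData W ℓ)

/-- Applying the bar involution to `bar_P` twice: `(DRD·R)·P = P`. -/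
lemma RR_P : conv (conv (sgn ℓ (Rm kl)) (Rm kl)) (Pm kl) = Pm kl := by
  funext y x
  by_cases hyx : y ≤ x
  · have key : toLaurent (kl.P y x) = ∑ u ∈ Icc y x, ∑ v ∈ Icc u x, (-1) ^ (ℓ y + ℓ u) *
        (toLaurent (kl.R y u) * (toLaurent (kl.R u v) * toLaurent (kl.P v x))) := by
      have h0 := congrArg invert (kl.bar_P hyx)
      rw [involutive_invert _, map_mul, invert_T, map_sum, neg_sub, Finset.sum_mul] at h0
      rw [h0]
      exact Finset.sum_congr rfl fun u hu => bar_term kl hyx hu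
    have lhs_eq : conv (conv (sgn ℓ (Rm kl)) (Rm kl)) (Pm kl) y x
        = ∑ v ∈ Icc y x, (∑ u ∈ Icc y v, (-1) ^ (ℓ y + ℓ u) * kl.R y u * kl.R u v) * kl.P v x := by
      rw [conv]
      refine Finset.sum_congr rfl fun v hv => ?_
      rw [conv, Finset.sum_mul]
      have hvx := (mem_Icc.1 hv).2
      rw [show Pm kl v x = kl.P v x by simp [Pm, hvx], ← Finset.sum_mul]
      refine congrArg (· * kl.P v x) ?_
      refine Finset.sum_congr rfl fun u hu => ?_
      have hyu := (mem_Icc.1 hu).1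
      have huv := (mem_Icc.1 hu).2
      simp [sgn, Rm, hyu, huv, mul_assoc]
    rw [lhs_eq, show Pm kl y x = kl.P y x by simp [Pm, hyx]]
    apply toLaurent_injective
    rw [key]
    simp only [map_sum, map_mul, map_pow, map_neg, map_one, Finset.sum_mul]
    rw [sum_Icc_comm y x (fun u v => (-1) ^ (ℓ y + ℓ u) *
        (toLaurent (kl.R y u) * (toLaurent (kl.R u v) * toLaurent (kl.P v x))))]
    exact Finset.sum_congr rfl fun u _ => Finset.sum_congr rfl fun v _ => by ring
  · rw [supported_conv _ _ y x hyx, supported_Pm kl y x hyx]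

variable (hmono : ∀ ⦃a b : W⦄, a < b → ℓ a < ℓ b)

lemma sgn_diag (A : W → W → Polynomial ℤ) (x : W) (h : A x x = 1) : sgn ℓ A x x = 1 := by
  simp [sgn, h, ← two_mul, pow_mul]

include hmono in
/-- The inversion `DRD · R = δ`. -/
lemma RR_inv : conv (sgn ℓ (Rm kl)) (Rm kl) = delta := by
  have h := cancel kl hmono (conv (sgn ℓ (Rm kl)) (Rm kl) - delta)
    (supported_sub (supported_conv _ _) supported_delta)
    (fun x => by
      simp [Pi.sub_apply, conv_diag, Rm_diag, delta,
        sgn_diag (ℓ := ℓ) (Rm kl) x (Rm_diag kl x)])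
    (fun y x => by
      rw [conv_sub_left, RR_P, conv_delta_left (supported_Pm kl), sub_self]
      rfl)
  exact sub_eq_zero.1 h

/-- `QP_inversion` in matrix form: `(DQD) · P = δ`. -/
lemma QP_inv : conv (sgn ℓ (Qm kl)) (Pm kl) = delta := by
  funext y x
  by_cases hyx : y ≤ x
  · rw [conv, show delta y x = if y = x then 1 else 0 from rfl, ← kl.QP_inversion hyx]
    refine Finset.sum_congr rfl fun z hz => ?_
    have h1 := (mem_Icc.1 hz).1
    have h2 := (mem_Icc.1 hz).2
    simp [sgn, Qm, Pm, h1, h2]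
  · rw [supported_conv _ _ y x hyx, supported_delta y x hyx]

include hmono in
/-- The right-inverse identity `P · (DQD) = δ`. -/
lemma PQ_inv : conv (Pm kl) (sgn ℓ (Qm kl)) = delta := by
  have h := cancel kl hmono (conv (Pm kl) (sgn ℓ (Qm kl)) - delta)
    (supported_sub (supported_conv _ _) supported_delta)
    (fun x => by
      simp [Pi.sub_apply, conv_diag, Pm_diag, delta,
        sgn_diag (ℓ := ℓ) (Qm kl) x (Qm_diag kl x)])
    (fun y x => by
      rw [conv_sub_left, conv_assoc, QP_inv kl, conv_delta_right (supported_Pm kl),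
        conv_delta_left (supported_Pm kl), sub_self]
      rfl)
  exact sub_eq_zero.1 h

include hmono in
/-- Sign-conjugated version: `(DPD) · Q = δ`. -/
lemma PQ_inv' : conv (sgn ℓ (Pm kl)) (Qm kl) = delta := by
  have h := congrArg (sgn ℓ) (PQ_inv kl hmono)
  rwa [sgn_conv, sgn_sgn, sgn_delta] at h

lemma Xi_eq (y x : W) : kl.Xi y x = conv (Qm kl) (conv (Rm kl) (Pm kl)) y x := by
  rw [KLData.Xi, conv]
  refine Finset.sum_congr rfl fun a ha => ?_
  rw [conv, Finset.mul_sum]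
  refine Finset.sum_congr rfl fun b hb => ?_
  simp [Qm, Rm, Pm, (mem_Icc.1 ha).1, (mem_Icc.1 hb).1, (mem_Icc.1 hb).2, mul_assoc]

include hmono in
lemma main_identity :
    conv (sgn ℓ (conv (Qm kl) (conv (Rm kl) (Pm kl)))) (conv (Qm kl) (conv (Rm kl) (Pm kl)))
      = delta := by
  rw [sgn_conv, sgn_conv, conv_assoc, conv_assoc,
    ← conv_assoc (sgn ℓ (Pm kl)) (Qm kl) (conv (Rm kl) (Pm kl)),
    PQ_inv' kl hmono, conv_delta_left (supported_conv _ _),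
    ← conv_assoc (sgn ℓ (Rm kl)) (Rm kl) (Pm kl),
    RR_inv kl hmono, conv_delta_left (supported_Pm kl), QP_inv kl]

end KL2
end XiInv


/-- For `y ≤ x` in a Coxeter group `W`, the polynomials `Ξ` satisfy the inversion
formula `Σ_{y ≤ z ≤ x} (-1)^{|y|+|z|} Ξ_{y,z}(q) Ξ_{z,x}(q) = δ_{x,y}`. -/
theorem xi_inversion {I W : Type*} [Group W] [DecidableEq W] [PartialOrder W]
    [LocallyFiniteOrder W] {M : CoxeterMatrix I} (cs : CoxeterSystem M W)
    (hBruhat : ∀ u v : W, u ≤ v ↔ cs.bruhatLE u v)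
    (kl : KLData W cs.length) (y x : W) (hyx : y ≤ x) :
    ∑ z ∈ Icc y x, (-1) ^ (cs.length y + cs.length z) * kl.Xi y z * kl.Xi z x =
      if x = y then 1 else 0 := by
  classical
  -- The Bruhat order is strictly compatible with the length function.
  have hmono : ∀ ⦃a b : W⦄, a < b → cs.length a < cs.length b := by
    intro a b hab
    have h' : Relation.ReflTransGen
        (fun a b => ∃ t, cs.IsReflection t ∧ b = a * t ∧ cs.length a < cs.length b) a b :=
      (hBruhat a b).1 hab.le
    have mono : ∀ {u v : W}, Relation.ReflTransGen
        (fun a b => ∃ t, cs.IsReflection t ∧ b = a * t ∧ cs.length a < cs.length b) u v →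
        cs.length u ≤ cs.length v := by
      intro u v h
      induction h with
      | refl => exact le_refl _
      | tail _ hbc ih => obtain ⟨t, _, _, hlen⟩ := hbc; exact ih.trans hlen.le
    rcases Relation.ReflTransGen.cases_head h' with heq | ⟨c, hac, hcb⟩
    · exact absurd heq hab.ne
    · obtain ⟨t, _, _, hlen⟩ := hac
      exact lt_of_lt_of_le hlen (mono hcb)
  have hmain := XiInv.main_identity kl hmono
  calc ∑ z ∈ Icc y x, (-1) ^ (cs.length y + cs.length z) * kl.Xi y z * kl.Xi z x
      = XiInv.conv (XiInv.sgn cs.length (XiInv.conv (XiInv.Qm kl) (XiInv.conv (XiInv.Rm kl) (XiInv.Pm kl))))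
          (XiInv.conv (XiInv.Qm kl) (XiInv.conv (XiInv.Rm kl) (XiInv.Pm kl))) y x := by
        rw [XiInv.conv]
        exact Finset.sum_congr rfl fun z _ => by
          rw [XiInv.sgn, XiInv.Xi_eq kl y z, XiInv.Xi_eq kl z x]
    _ = XiInv.delta y x := by rw [hmain]
    _ = if x = y then 1 else 0 := by simp [XiInv.delta, eq_comm]
end
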